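/- For the product of S¹ with an n-dimensional cube of side h (all h_j = h), Pólya's conjecture fails for the first eigenvalue λ₁ = nπ²/h² when h > n^{(n+1)/2}·π^{(n+3)/2}/(2^n·Γ((n+3)/2)). -/

import Mathlib

open Real

theorem stmt19 (n : ℕ) (hn : 1 ≤ n) (h : ℝ) (hh : 0 < h) :
    ¬ (1 ≤ ((n:ℝ)*π^2/h^2) ^ (((n:ℝ)+1)/2) *
        (h^n / (2^n * π ^ (((n:ℝ)-1)/2) * Real.Gamma (((n:ℝ)+3)/2))))
    ↔ h > (n:ℝ) ^ (((n:ℝ)+1)/2) * π ^ (((n:ℝ)+3)/2) /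
        (2^n * Real.Gamma (((n:ℝ)+3)/2)) := by
  have hπ := Real.pi_pos
  have hΓ : 0 < Real.Gamma (((n:ℝ)+3)/2) := Real.Gamma_pos_of_pos (by positivity)
  have hn' : (0:ℝ) < n := by exact_mod_cast hn
  have key : ((n:ℝ)*π^2/h^2) ^ (((n:ℝ)+1)/2) *
        (h^n / (2^n * π ^ (((n:ℝ)-1)/2) * Real.Gamma (((n:ℝ)+3)/2)))
      = ((n:ℝ) ^ (((n:ℝ)+1)/2) * π ^ (((n:ℝ)+3)/2) /
        (2^n * Real.Gamma (((n:ℝ)+3)/2))) / h := by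
    rw [Real.div_rpow (by positivity) (sq_nonneg h),
        Real.mul_rpow (by positivity) (sq_nonneg π)]
    have e1 : ((π:ℝ)^2) ^ (((n:ℝ)+1)/2) = π ^ ((n:ℝ)+1) := by
      rw [← Real.rpow_natCast π 2, ← Real.rpow_mul hπ.le]; norm_num; ring_nf
    have e2 : ((h:ℝ)^2) ^ (((n:ℝ)+1)/2) = h ^ ((n:ℝ)+1) := by
      rw [← Real.rpow_natCast h 2, ← Real.rpow_mul hh.le]; norm_num; ring_nf
    have e3 : π ^ ((n:ℝ)+1) = π ^ (((n:ℝ)+3)/2) * π ^ (((n:ℝ)-1)/2) := by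
      rw [← Real.rpow_add hπ]; ring_nf
    have e4 : h ^ ((n:ℝ)+1) = h ^ n * h := by
      rw [Real.rpow_add hh, Real.rpow_one, Real.rpow_natCast]
    rw [e1, e2, e3, e4]
    have hp1 : (0:ℝ) < π ^ (((n:ℝ)-1)/2) := Real.rpow_pos_of_pos hπ _
    field_simp
  rw [key, not_le, gt_iff_lt, div_lt_one hh]
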